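/- The interleaved sequence of ratios a'_{2k-1}/a'_{2k}, a_{2k}/a_{2k+1} is strictly increasing (a'_1/a'_2 < a_2/a_3 < a'_3/a'_4 < a_4/a_5 < ⋯) and converges to β = (c₁c₂ - √(c₁²c₂² - 4c₁c₂))/(2c₂). -/
import Mathlib

/-- Chebyshev-type sequence: `cheb X n` is `P_{n-1}(X)`, with `P_{-1}=0`, `P_0=1`,
`P_k = X·P_{k-1} - P_{k-2}`. -/
def cheb (X : ℤ) : ℕ → ℤ
  | 0 => 0
  | 1 => 1
  | (n+2) => X * cheb X (n+1) - cheb X n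

lemma cheb_rec (X : ℤ) (n : ℕ) : cheb X (n+2) = X * cheb X (n+1) - cheb X n := rfl

lemma cheb_grow {X : ℤ} (hX : 2 ≤ X) : ∀ n : ℕ, (n : ℤ) ≤ cheb X n ∧ cheb X n + 1 ≤ cheb X (n+1)
  | 0 => by simp [cheb]
  | (n+1) => by
    obtain ⟨h1, h2⟩ := cheb_grow hX n
    constructor
    · push_cast; linarith
    · rw [cheb_rec]
      nlinarith [mul_nonneg (by linarith : (0:ℤ) ≤ X - 2) (by linarith [Int.ofNat_nonneg n] : (0:ℤ) ≤ cheb X (n+1))]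

lemma cheb_cassini (X : ℤ) : ∀ n : ℕ, cheb X (n+1)^2 + cheb X n^2 - X * cheb X n * cheb X (n+1) = 1
  | 0 => by simp [cheb]
  | (n+1) => by
    have ih := cheb_cassini X n
    rw [cheb_rec]
    ring_nf
    ring_nf at ih
    linarith [ih]

lemma cheb_ratio {X : ℤ} (hX : 2 ≤ X) : ∀ n : ℕ, ((n:ℤ)+1) * cheb X n ≤ (n:ℤ) * cheb X (n+1)
  | 0 => by simp [cheb]
  | (n+1) => by
    have ih := cheb_ratio hX n
    obtain ⟨h1, h2⟩ := cheb_grow hX n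
    rw [cheb_rec]
    push_cast
    nlinarith [mul_nonneg (mul_nonneg (by positivity : (0:ℤ) ≤ (n:ℤ)+1) (by linarith : (0:ℤ) ≤ X - 2)) (by linarith [Int.ofNat_nonneg n] : (0:ℤ) ≤ cheb X (n+1))]

lemma cheb_pos {X : ℤ} (hX : 2 ≤ X) (k : ℕ) : 0 < cheb X (k+1) := by
  have := (cheb_grow hX (k+1)).1
  push_cast at this; linarith

lemma cheb_nonneg {X : ℤ} (hX : 2 ≤ X) (k : ℕ) : 0 ≤ cheb X k := by
  have := (cheb_grow hX k).1
  linarith [Int.ofNat_nonneg k]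

/-- `seqA c X l` is `a_l`: `a_{2k} = c·P_{k-1}(X)`, `a_{2k+1} = P_k(X)+P_{k-1}(X)`. -/
def seqA (c X : ℤ) (l : ℕ) : ℤ :=
  if l % 2 = 0 then c * cheb X (l / 2) else cheb X (l / 2 + 1) + cheb X (l / 2)

lemma seqA_even (c X : ℤ) (k : ℕ) : seqA c X (2*k) = c * cheb X k := by
  have h1 : (2*k) % 2 = 0 := by omega
  have h2 : (2*k) / 2 = k := by omega
  simp [seqA, h1, h2]

lemma seqA_odd (c X : ℤ) (k : ℕ) : seqA c X (2*k+1) = cheb X (k+1) + cheb X k := by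
  have h1 : (2*k+1) % 2 = 1 := by omega
  have h2 : (2*k+1) / 2 = k := by omega
  simp [seqA, h1, h2]

lemma mu_r_bound {X : ℤ} (hX : 2 ≤ X) {μ : ℝ} (hμpos : 0 < μ) (hμ1 : μ ≤ 1)
    (hq : μ^2 = (X:ℝ)*μ - 1) :
    ∀ k : ℕ, (cheb X k : ℝ) ≤ μ * (cheb X (k+1):ℝ) ∧
      ((k:ℝ)+1) * (μ * (cheb X (k+1):ℝ) - (cheb X k:ℝ)) ≤ (cheb X (k+1):ℝ)
  | 0 => by norm_num [cheb]; exact ⟨hμpos.le, hμ1⟩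
  | (k+1) => by
    obtain ⟨ih1, ih2⟩ := mu_r_bound hX hμpos hμ1 hq k
    have hrec : ((cheb X (k+2) : ℤ):ℝ) = (X:ℝ) * (cheb X (k+1):ℝ) - (cheb X k:ℝ) := by
      rw [cheb_rec]; push_cast; ring
    have hrat := cheb_ratio hX (k+1)
    have hratR : ((k:ℝ)+2) * (cheb X (k+1):ℝ) ≤ ((k:ℝ)+1) * (cheb X (k+2):ℝ) := by
      have : (((k:ℤ)+1)+1) * cheb X (k+1) ≤ ((k:ℤ)+1) * cheb X (k+2) := by exact_mod_cast hrat
      exact_mod_cast by push_cast at this ⊢; linarith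
    have hdpos : (0:ℝ) < (cheb X (k+1):ℝ) := by exact_mod_cast cheb_pos hX k
    have hkey : μ * (cheb X (k+2):ℝ) - (cheb X (k+1):ℝ)
        = μ * (μ * (cheb X (k+1):ℝ) - (cheb X k:ℝ)) := by
      rw [hrec]; linear_combination (-(cheb X (k+1):ℝ)) * hq
    have hD : 0 ≤ μ * (cheb X (k+1):ℝ) - (cheb X k:ℝ) := by linarith
    constructor
    · nlinarith [mul_nonneg hμpos.le hD]
    · push_cast
      have h5 : ((k:ℝ)+1) * ((((k:ℝ)+1)+1) * (μ * (cheb X (k+2):ℝ) - (cheb X (k+1):ℝ)))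
          ≤ ((k:ℝ)+1) * (cheb X (k+2):ℝ) := by
        rw [hkey]
        nlinarith [mul_le_mul_of_nonneg_left ih2 (by positivity : (0:ℝ) ≤ (k:ℝ)+2),
          mul_nonneg (by positivity : (0:ℝ) ≤ (k:ℝ)+2) (mul_nonneg hμpos.le hD)]
      exact le_of_mul_le_mul_left h5 (by positivity)

/-- The interleaved ratio sequence `a'_1/a'_2 < a_2/a_3 < a'_3/a'_4 < a_4/a_5 < ⋯`
is strictly increasing and converges to `β = (c₁c₂ - √(c₁²c₂² - 4c₁c₂))/(2c₂)`.
Here the `n`-th term (n ≥ 1) is `a'_n/a'_{n+1}` if `n` is odd and `a_n/a_{n+1}` if `n` is even. -/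
theorem interleaved_ratios_increasing_tendsto (c₁ c₂ : ℤ) (h₁ : 0 < c₁) (h₂ : 0 < c₂)
    (h4 : 4 ≤ c₁ * c₂) :
    let a : ℕ → ℤ := seqA c₁ (c₁ * c₂ - 2)
    let a' : ℕ → ℤ := seqA c₂ (c₁ * c₂ - 2)
    let s : ℕ → ℝ := fun n =>
      if n % 2 = 1 then (a' n : ℝ) / (a' (n + 1) : ℝ) else (a n : ℝ) / (a (n + 1) : ℝ)
    (∀ n : ℕ, 1 ≤ n → s n < s (n + 1)) ∧
      Filter.Tendsto s Filter.atTop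
        (nhds (((c₁ : ℝ) * c₂ - Real.sqrt ((c₁ : ℝ) ^ 2 * (c₂ : ℝ) ^ 2 - 4 * ((c₁ : ℝ) * c₂)))
          / (2 * (c₂ : ℝ)))) := by
  intro a a' s
  have hs : ∀ n, s n = if n % 2 = 1
      then ((seqA c₂ (c₁*c₂-2) n : ℝ) / (seqA c₂ (c₁*c₂-2) (n+1) : ℝ))
      else ((seqA c₁ (c₁*c₂-2) n : ℝ) / (seqA c₁ (c₁*c₂-2) (n+1) : ℝ)) := fun n => rfl
  set X : ℤ := c₁ * c₂ - 2 with hXdef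
  have hX : 2 ≤ X := by omega
  -- unfolded formulas for s
  have hs_odd : ∀ k : ℕ, s (2*k+1)
      = ((cheb X (k+1) : ℝ) + (cheb X k : ℝ)) / ((c₂:ℝ) * (cheb X (k+1) : ℝ)) := by
    intro k
    rw [hs]
    have h1 : (2*k+1) % 2 = 1 := by omega
    rw [if_pos h1, seqA_odd, show 2*k+1+1 = 2*(k+1) by ring, seqA_even]
    push_cast; ring
  have hs_even : ∀ k : ℕ, s (2*k)
      = ((c₁:ℝ) * (cheb X k : ℝ)) / ((cheb X (k+1) : ℝ) + (cheb X k : ℝ)) := by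
    intro k
    rw [hs]
    have h1 : ¬ ((2*k) % 2 = 1) := by omega
    rw [if_neg h1, seqA_even, seqA_odd]
    push_cast; ring
  -- positivity
  have hdR : ∀ k : ℕ, (0:ℝ) < (cheb X (k+1) : ℝ) := fun k => by exact_mod_cast cheb_pos hX k
  have hcR : ∀ k : ℕ, (0:ℝ) ≤ (cheb X k : ℝ) := fun k => by exact_mod_cast cheb_nonneg hX k
  have hc₁R : (0:ℝ) < (c₁:ℝ) := by exact_mod_cast h₁
  have hc₂R : (1:ℝ) ≤ (c₂:ℝ) := by exact_mod_cast h₂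
  -- Part 1: strict monotonicity
  have hmono : ∀ n : ℕ, 1 ≤ n → s n < s (n + 1) := by
    intro n hn
    rcases Nat.even_or_odd n with ⟨k, hk⟩ | ⟨k, hk⟩
    · -- n = 2k, k ≥ 1
      subst hk
      rw [show k + k = 2*k by ring] at hn ⊢
      rw [show 2*k+1 = 2*k+1 from rfl, hs_even k, hs_odd k]
      rw [div_lt_div_iff₀ (by have := hdR k; have := hcR k; linarith) (mul_pos (by linarith : (0:ℝ) < (c₂:ℝ)) (hdR k))]
      have hZ : c₁ * cheb X k * (c₂ * cheb X (k+1)) + 1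
          = (cheb X (k+1) + cheb X k) * (cheb X (k+1) + cheb X k) := by
        linear_combination (-1 : ℤ) * cheb_cassini X k
          - (cheb X k * cheb X (k+1)) * hXdef
      have hZ' : ((c₁ * cheb X k * (c₂ * cheb X (k+1)) : ℤ) : ℝ)
          < (((cheb X (k+1) + cheb X k) * (cheb X (k+1) + cheb X k) : ℤ) : ℝ) := by
        exact_mod_cast by omega
      push_cast at hZ'
      nlinarith [hZ']
    · -- n = 2k+1
      subst hk
      rw [hs_odd k, show 2*k+1+1 = 2*(k+1) by ring, hs_even (k+1)]
      rw [div_lt_div_iff₀ (mul_pos (by linarith : (0:ℝ) < (c₂:ℝ)) (hdR k))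
        (by have := hdR (k+1); have := hcR (k+1); linarith)]
      have hZ : (cheb X (k+1) + cheb X k) * (cheb X (k+2) + cheb X (k+1)) + 1
          = c₁ * c₂ * (cheb X (k+1) * cheb X (k+1)) := by
        rw [cheb_rec]
        linear_combination (-1 : ℤ) * cheb_cassini X k
          + (cheb X (k+1) * cheb X (k+1)) * hXdef
      have hZ' : (((cheb X (k+1) + cheb X k) * (cheb X (k+2) + cheb X (k+1)) : ℤ) : ℝ)
          < ((c₁ * c₂ * (cheb X (k+1) * cheb X (k+1)) : ℤ) : ℝ) := by
        exact_mod_cast by omega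
      push_cast at hZ'
      nlinarith [hZ']
  refine ⟨hmono, ?_⟩
  -- Part 2: convergence
  have hxR : (X:ℝ) = (c₁:ℝ)*c₂ - 2 := by rw [hXdef]; push_cast; ring
  have hXR2 : (2:ℝ) ≤ (X:ℝ) := by exact_mod_cast hX
  have h4R : (0:ℝ) ≤ (X:ℝ)^2 - 4 := by nlinarith
  set sq : ℝ := Real.sqrt ((X:ℝ)^2 - 4) with hsqdef
  have hs2 : sq^2 = (X:ℝ)^2 - 4 := Real.sq_sqrt h4R
  have hsnn : 0 ≤ sq := Real.sqrt_nonneg _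
  set μ : ℝ := ((X:ℝ) - sq)/2 with hμdef
  have hμpos : 0 < μ := by rw [hμdef]; nlinarith
  have hμ1 : μ ≤ 1 := by
    have hle : (X:ℝ) - 2 ≤ sq := Real.le_sqrt_of_sq_le (by nlinarith)
    rw [hμdef]; linarith
  have hq : μ^2 = (X:ℝ)*μ - 1 := by rw [hμdef]; linear_combination (1/4 : ℝ) * hs2
  have hc₂ne : (c₂:ℝ) ≠ 0 := by linarith
  have hβ : ((c₁:ℝ) * c₂ - Real.sqrt ((c₁:ℝ)^2 * (c₂:ℝ)^2 - 4*((c₁:ℝ)*c₂))) / (2*(c₂:ℝ))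
      = (1+μ)/(c₂:ℝ) := by
    have harg : (c₁:ℝ)^2 * (c₂:ℝ)^2 - 4*((c₁:ℝ)*c₂) = (X:ℝ)^2 - 4 := by rw [hxR]; ring
    rw [harg, ← hsqdef, hμdef]
    field_simp
    rw [hxR]; ring
  rw [hβ]
  have hbound := mu_r_bound hX hμpos hμ1 hq
  have hb_odd : ∀ j : ℕ, (1+μ)/(c₂:ℝ) - 1/((j:ℝ)+1) ≤ s (2*j+1)
      ∧ s (2*j+1) ≤ (1+μ)/(c₂:ℝ) := by
    intro j
    obtain ⟨hb1, hb2⟩ := hbound j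
    have hd := hdR j
    have hc := hcR j
    constructor
    · have key : (1+μ)/(c₂:ℝ) - ((cheb X (j+1):ℝ) + (cheb X j:ℝ))/((c₂:ℝ)*(cheb X (j+1):ℝ))
          = (μ*(cheb X (j+1):ℝ) - (cheb X j:ℝ))/((c₂:ℝ)*(cheb X (j+1):ℝ)) := by
        field_simp; ring
      have h7 : (μ*(cheb X (j+1):ℝ) - (cheb X j:ℝ))/((c₂:ℝ)*(cheb X (j+1):ℝ))
          ≤ 1/((j:ℝ)+1) := by
        rw [div_le_div_iff₀ (mul_pos (by linarith) hd) (by positivity)]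
        nlinarith [hb2]
      rw [hs_odd j]; linarith
    · rw [hs_odd j, div_le_div_iff₀ (mul_pos (by linarith) hd) (by linarith)]
      nlinarith [hb1]
  have hb_all : ∀ n : ℕ, 1 ≤ n →
      (1+μ)/(c₂:ℝ) - 2/(n:ℝ) ≤ s n ∧ s n ≤ (1+μ)/(c₂:ℝ) := by
    intro n hn
    rcases Nat.even_or_odd n with ⟨k, hk⟩ | ⟨k, hk⟩
    · subst hk
      obtain ⟨m, rfl⟩ : ∃ m, k = m + 1 := ⟨k - 1, by omega⟩
      rw [show (m+1) + (m+1) = 2*(m+1) by ring]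
      constructor
      · have hlow := (hb_odd m).1
        have hstep := hmono (2*m+1) (by omega)
        rw [show 2*m+1+1 = 2*(m+1) by ring] at hstep
        have harith : 2/((2*(m+1) : ℕ):ℝ) = 1/((m:ℝ)+1) := by
          push_cast; rw [div_eq_div_iff (by positivity) (by positivity)]; ring
        rw [harith]; linarith
      · have hup := (hb_odd (m+1)).2
        have hstep := hmono (2*(m+1)) (by omega)
        linarith
    · subst hk
      constructor
      · have hlow := (hb_odd k).1
        have harith : 1/((k:ℝ)+1) ≤ 2/((2*k+1 : ℕ):ℝ) := by
          rw [div_le_div_iff₀ (by positivity) (by positivity)]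
          push_cast; linarith
        linarith
      · exact (hb_odd k).2
  have t1 : Filter.Tendsto (fun n : ℕ => (1+μ)/(c₂:ℝ) - 2/(n:ℝ)) Filter.atTop
      (nhds ((1+μ)/(c₂:ℝ))) := by
    have h0 : Filter.Tendsto (fun n : ℕ => 2/(n:ℝ)) Filter.atTop (nhds 0) :=
      tendsto_const_div_atTop_nhds_zero_nat 2
    simpa using tendsto_const_nhds.sub h0
  exact tendsto_of_tendsto_of_tendsto_of_le_of_le' t1 tendsto_const_nhds
    (Filter.eventually_atTop.2 ⟨1, fun n hn => (hb_all n hn).1⟩)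
    (Filter.eventually_atTop.2 ⟨1, fun n hn => (hb_all n hn).2⟩)
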